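/- arXiv:0803.3951 — 2 statements merged into one kernel-verified Lean document; each statement's English description precedes it below -/
import Mathlib

section
/- Let f: V ⇢ V be a rational map, ι: ℙ¹ ⇢ V a rational embedding, and φ a Möbius transformation with f ∘ ι = ι ∘ φ. If H = F/G with F, G regular along ι(ℙ¹) is a rational first integral of f (H ∘ f = H), then the generic junior part H°_ι = F°_ι / G°_ι is a first integral of the variational equation φY = Df(ι)·Y along ι. -/
/-!
Restrict the identity `(F ∘ f) · G = (G ∘ f) · F` to the line `t ↦ ι z + t • w` through a point
of the curve. Since `F` vanishes to order `kF` along the curve, `F` of that line is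
`t ^ kF / kF! · F°(z, w) + O(t ^ (kF + 1))`; since `f` maps the curve into itself, `F` of the image
line is `t ^ kF / kF! · F°(φ z, Df(ι z) w) + O(t ^ (kF + 1))`, and likewise for `G`. Dividing the
identity by `t ^ (kF + kG)` and letting `t → 0` compares the leading coefficients.
-/

open Filter Topology Asymptotics

section LeadingTerm

variable {𝕜 : Type*} [NontriviallyNormedField 𝕜] {E : Type*} [NormedAddCommGroup E]
  [NormedSpace 𝕜 E] {F : Type*} [NormedAddCommGroup F] [NormedSpace 𝕜 F]
  {f : E → F} {p : FormalMultilinearSeries 𝕜 E F} {x : E} {k : ℕ}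

theorem HasFPowerSeriesAt.isBigO_sub_apply_diag (hf : HasFPowerSeriesAt f p x)
    (hp : ∀ m < k, ∀ y, p m (fun _ => y) = 0) :
    (fun y => f (x + y) - p k (fun _ => y)) =O[𝓝 0] fun y => ‖y‖ ^ (k + 1) := by
  have hsum : ∀ y, p.partialSum (k + 1) y = p k (fun _ => y) := fun y => by
    rw [FormalMultilinearSeries.partialSum, Finset.sum_range_succ,
      Finset.sum_eq_zero fun m hm => hp m (Finset.mem_range.mp hm) y, zero_add]
  simpa only [hsum] using hf.isBigO_sub_partialSum_pow (k + 1)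

theorem HasFPowerSeriesAt.tendsto_inv_pow_smul_comp {q : 𝕜 → E} {u : E}
    (hf : HasFPowerSeriesAt f p (q 0)) (hp : ∀ m < k, ∀ y, p m (fun _ => y) = 0)
    (hq : HasDerivAt q u 0) :
    Tendsto (fun t => (t ^ k)⁻¹ • f (q t)) (𝓝[≠] 0) (𝓝 (p k fun _ => u)) := by
  set e : 𝕜 → E := fun t => q t - q 0
  have he : Tendsto e (𝓝 0) (𝓝 0) := by
    have : ContinuousAt e 0 := hq.continuousAt.sub continuousAt_const
    simpa [e] using this.tendsto
  have heO : e =O[𝓝 0] fun t => t := by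
    simpa using hq.hasFDerivAt.isBigO_sub
  have hrem : (fun t => f (q t) - p k (fun _ => e t)) =o[𝓝 0] fun t => t ^ k := by
    have := (hf.isBigO_sub_apply_diag hp).comp_tendsto he
    simp only [Function.comp_def, e, add_sub_cancel] at this
    exact this.trans_isLittleO ((heO.norm_left.pow (k + 1)).trans_isLittleO
      (isLittleO_pow_pow k.lt_succ_self))
  have hslope : Tendsto (fun t => t⁻¹ • e t) (𝓝[≠] 0) (𝓝 u) := by
    simpa [slope_fun_def, e] using hasDerivAt_iff_tendsto_slope.mp hq
  have hlead : Tendsto (fun t => p k fun _ => t⁻¹ • e t) (𝓝[≠] 0) (𝓝 (p k fun _ => u)) :=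
    (((p k).cont.comp (continuous_pi fun _ => continuous_id)).tendsto u).comp hslope
  have hsum := (hrem.mono nhdsWithin_le_nhds).tendsto_inv_smul_nhds_zero.add hlead
  rw [zero_add] at hsum
  refine hsum.congr' ?_
  filter_upwards [self_mem_nhdsWithin] with t (ht : t ≠ 0)
  have hhom : p k (fun _ => e t) = t ^ k • p k (fun _ => t⁻¹ • e t) := by
    simp only [(p k).map_smul_univ (fun _ => t⁻¹) (fun _ => e t), Finset.prod_const,
      Finset.card_univ, Fintype.card_fin, smul_smul, ← mul_pow, mul_inv_cancel₀ ht, one_pow,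
      one_smul]
  rw [hhom, smul_sub, inv_smul_smul₀ (pow_ne_zero k ht), sub_add_cancel]

variable [CharZero 𝕜] [CompleteSpace F]

theorem AnalyticAt.tendsto_factorial_smul_inv_pow_smul_comp {q : 𝕜 → E} {u : E}
    (hf : AnalyticAt 𝕜 f (q 0))
    (hvan : ∀ m < k, ∀ y, iteratedFDeriv 𝕜 m f (q 0) (fun _ => y) = 0)
    (hq : HasDerivAt q u 0) :
    Tendsto (fun t => k.factorial • (t ^ k)⁻¹ • f (q t)) (𝓝[≠] 0)
      (𝓝 (iteratedFDeriv 𝕜 k f (q 0) fun _ => u)) := by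
  obtain ⟨p, r, hpr⟩ := hf
  have hp : ∀ m < k, ∀ y, p m (fun _ => y) = 0 := fun m hm y => by
    have := hpr.factorial_smul y m
    rwa [hvan m hm y, ← Nat.cast_smul_eq_nsmul 𝕜, smul_eq_zero,
      or_iff_right (Nat.cast_ne_zero.mpr (Nat.factorial_ne_zero m))] at this
  rw [← hpr.factorial_smul u k]
  exact (hpr.hasFPowerSeriesAt.tendsto_inv_pow_smul_comp hp hq).const_smul _

end LeadingTerm

theorem iteratedFDeriv_mul_eq_of_eventually_mul_eq {𝕜 : Type*} [NontriviallyNormedField 𝕜]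
    [CharZero 𝕜] [CompleteSpace 𝕜] {E : Type*} [NormedAddCommGroup E] [NormedSpace 𝕜 E]
    {F G : E → 𝕜} {P Q : 𝕜 → E} {v u : E} {kF kG : ℕ}
    (hFP : AnalyticAt 𝕜 F (P 0)) (hGP : AnalyticAt 𝕜 G (P 0))
    (hFQ : AnalyticAt 𝕜 F (Q 0)) (hGQ : AnalyticAt 𝕜 G (Q 0))
    (hvFP : ∀ m < kF, ∀ y, iteratedFDeriv 𝕜 m F (P 0) (fun _ => y) = 0)
    (hvGP : ∀ m < kG, ∀ y, iteratedFDeriv 𝕜 m G (P 0) (fun _ => y) = 0)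
    (hvFQ : ∀ m < kF, ∀ y, iteratedFDeriv 𝕜 m F (Q 0) (fun _ => y) = 0)
    (hvGQ : ∀ m < kG, ∀ y, iteratedFDeriv 𝕜 m G (Q 0) (fun _ => y) = 0)
    (hP : HasDerivAt P v 0) (hQ : HasDerivAt Q u 0)
    (h : ∀ᶠ t in 𝓝[≠] 0, F (Q t) * G (P t) = G (Q t) * F (P t)) :
    iteratedFDeriv 𝕜 kF F (Q 0) (fun _ => u) * iteratedFDeriv 𝕜 kG G (P 0) (fun _ => v) =
      iteratedFDeriv 𝕜 kG G (Q 0) (fun _ => u) * iteratedFDeriv 𝕜 kF F (P 0) (fun _ => v) := by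
  have lhs := (hFQ.tendsto_factorial_smul_inv_pow_smul_comp hvFQ hQ).mul
    (hGP.tendsto_factorial_smul_inv_pow_smul_comp hvGP hP)
  have rhs := (hGQ.tendsto_factorial_smul_inv_pow_smul_comp hvGQ hQ).mul
    (hFP.tendsto_factorial_smul_inv_pow_smul_comp hvFP hP)
  refine tendsto_nhds_unique (lhs.congr' ?_) rhs
  filter_upwards [h] with t ht
  simp only [nsmul_eq_mul, smul_eq_mul]
  linear_combination ((kF.factorial : 𝕜) * (kG.factorial : 𝕜) * (t ^ kF)⁻¹ * (t ^ kG)⁻¹) * ht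

theorem stmt_7_general {N : ℕ} (f : (Fin N → ℂ) → Fin N → ℂ)
    (F G : (Fin N → ℂ) → ℂ) (ι : ℂ → Fin N → ℂ) (φ : ℂ → ℂ)
    (hf : ContDiff ℂ ⊤ f) (hF : ContDiff ℂ ⊤ F) (hG : ContDiff ℂ ⊤ G)
    (hadapted : ∀ z, f (ι z) = ι (φ z))
    (hFI : ∀ p, F (f p) * G p = G (f p) * F p)
    (kF kG : ℕ)
    (hkF : (∀ m < kF, ∀ z w, iteratedFDeriv ℂ m F (ι z) (fun _ => w) = 0) ∧
      ¬ (∀ z w, iteratedFDeriv ℂ kF F (ι z) (fun _ => w) = 0))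
    (hkG : (∀ m < kG, ∀ z w, iteratedFDeriv ℂ m G (ι z) (fun _ => w) = 0) ∧
      ¬ (∀ z w, iteratedFDeriv ℂ kG G (ι z) (fun _ => w) = 0)) :
    ∀ (z : ℂ) (w : Fin N → ℂ),
      iteratedFDeriv ℂ kF F (ι (φ z)) (fun _ => fderiv ℂ f (ι z) w) *
        iteratedFDeriv ℂ kG G (ι z) (fun _ => w) =
      iteratedFDeriv ℂ kG G (ι (φ z)) (fun _ => fderiv ℂ f (ι z) w) *
        iteratedFDeriv ℂ kF F (ι z) (fun _ => w) := by
  intro z w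
  set P : ℂ → Fin N → ℂ := fun t => ι z + t • w
  have hP0 : P 0 = ι z := by simp [P]
  have hQ0 : (f ∘ P) 0 = ι (φ z) := by simp only [Function.comp_apply, hP0, hadapted]
  have hP : HasDerivAt P w 0 := by
    simpa [P] using ((hasDerivAt_id (0 : ℂ)).smul_const w).const_add (ι z)
  have hQ : HasDerivAt (f ∘ P) (fderiv ℂ f (ι z) w) 0 := by
    rw [← hP0]
    exact (hf.differentiable (by simp) (P 0)).hasFDerivAt.comp_hasDerivAt 0 hP
  have key := iteratedFDeriv_mul_eq_of_eventually_mul_eq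
    hF.contDiffAt.analyticAt hG.contDiffAt.analyticAt
    hF.contDiffAt.analyticAt hG.contDiffAt.analyticAt
    (hP0 ▸ fun m hm => hkF.1 m hm z) (hP0 ▸ fun m hm => hkG.1 m hm z)
    (hQ0 ▸ fun m hm => hkF.1 m hm (φ z)) (hQ0 ▸ fun m hm => hkG.1 m hm (φ z))
    hP hQ (Eventually.of_forall fun t => hFI (P t))
  rwa [hQ0, hP0] at key

/-- Let `f : V ⇢ V` (here `V = ℂ^N`), `ι : ℙ¹ ⇢ V` a curve (parametrized by
`z ∈ ℂ`) that is `φ`-adapted: `f ∘ ι = ι ∘ φ`. Let `H = F/G` be a first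
integral of `f` with `F, G` regular along the curve, i.e.
`(F ∘ f)·G = (G ∘ f)·F`. Let `kF` (resp. `kG`) be the generic valuation of `F`
(resp. `G`) along `ι`: the least `m` such that the `m`-th derivative of `F`
along the curve is not identically zero; the generic junior part of `F` is the
fiberwise function `(z, w) ↦ D^{kF}F(ι z)(w,…,w)`. Then the junior part
`H° = F°/G°` is a first integral of the variational equation
`Y(φz) = Df(ι z)·Y(z)`:
`F°(φz, Df(ι z)w) · G°(z,w) = G°(φz, Df(ι z)w) · F°(z,w)`. -/
theorem stmt_7 {N : ℕ} (f : (Fin N → ℂ) → Fin N → ℂ)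
    (F G : (Fin N → ℂ) → ℂ) (ι : ℂ → Fin N → ℂ) (φ : ℂ → ℂ)
    (hf : ContDiff ℂ ⊤ f) (hF : ContDiff ℂ ⊤ F) (hG : ContDiff ℂ ⊤ G)
    (hι : ContDiff ℂ ⊤ ι)
    (hadapted : ∀ z, f (ι z) = ι (φ z))
    (hFI : ∀ p, F (f p) * G p = G (f p) * F p)
    (kF kG : ℕ)
    (hkF : (∀ m < kF, ∀ z w, iteratedFDeriv ℂ m F (ι z) (fun _ => w) = 0) ∧
      ¬ (∀ z w, iteratedFDeriv ℂ kF F (ι z) (fun _ => w) = 0))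
    (hkG : (∀ m < kG, ∀ z w, iteratedFDeriv ℂ m G (ι z) (fun _ => w) = 0) ∧
      ¬ (∀ z w, iteratedFDeriv ℂ kG G (ι z) (fun _ => w) = 0)) :
    ∀ (z : ℂ) (w : Fin N → ℂ),
      iteratedFDeriv ℂ kF F (ι (φ z)) (fun _ => fderiv ℂ f (ι z) w) *
        iteratedFDeriv ℂ kG G (ι z) (fun _ => w) =
      iteratedFDeriv ℂ kG G (ι (φ z)) (fun _ => fderiv ℂ f (ι z) w) *
        iteratedFDeriv ℂ kF F (ι z) (fun _ => w) :=
  stmt_7_general f F G ι φ hf hF hG hadapted hFI kF kG hkF hkG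
end

section
/- Consider the rational map f(x, y) = (qx/(1 − y/(x−1)), q̄·y·(1 − y/(x−1))) on ℂ². If q·q̄ is a primitive m-th root of unity, then F(x, y) = (xy)^m is a non-constant rational first integral of f, i.e., F ∘ f = F. -/
lemma one_sub_div_sub_one_ne_zero {K : Type*} [Field K] {x y : K} (hx : x ≠ 1)
    (hy : y ≠ x - 1) : 1 - y / (x - 1) ≠ 0 := by
  have hx1 : x - 1 ≠ 0 := sub_ne_zero.mpr hx
  rw [one_sub_div hx1]
  exact div_ne_zero (sub_ne_zero.mpr hy.symm) hx1

lemma div_mul_mul_cancel₀ {G : Type*} [CommGroupWithZero G] (a b : G) {c : G} (hc : c ≠ 0) :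
    a / c * (b * c) = a * b := by
  rw [mul_left_comm, div_mul_cancel₀ _ hc, mul_comm]

lemma first_integral_pow_mul_eq {K : Type*} [Field K] {q qb : K} {m : ℕ}
    (hroot : (q * qb) ^ m = 1) {x y : K} (hx : x ≠ 1) (hy : y ≠ x - 1) :
    ((q * x / (1 - y / (x - 1))) * (qb * y * (1 - y / (x - 1)))) ^ m = (x * y) ^ m := by
  rw [div_mul_mul_cancel₀ _ _ (one_sub_div_sub_one_ne_zero hx hy),
    mul_mul_mul_comm, mul_pow, hroot, one_mul]

theorem stmt_9_general (q qb : ℂ) (m : ℕ) (hm : 1 ≤ m)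
    (hroot : (q * qb) ^ m = 1) :
    (∀ x y : ℂ, x ≠ 1 → y ≠ x - 1 →
      ((q * x / (1 - y / (x - 1))) * (qb * y * (1 - y / (x - 1)))) ^ m
        = (x * y) ^ m) ∧
    -- `F(x,y) = (xy)^m` is non-constant
    (∃ x y x' y' : ℂ, (x * y) ^ m ≠ (x' * y') ^ m) :=
  ⟨fun _ _ hx hy => first_integral_pow_mul_eq hroot hx hy,
    ⟨1, 1, 0, 0, by simp [zero_pow (Nat.one_le_iff_ne_zero.mp hm)]⟩⟩

/-- For the rational map
`f(x, y) = (qx/(1 − y/(x−1)), q̄·y·(1 − y/(x−1)))` on `ℂ²`, if `q·q̄` is an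
`m`-th root of unity (`m ≥ 1`), then `F(x, y) = (xy)^m` is a non-constant
rational first integral of `f` : `F ∘ f = F` wherever `f` is defined. -/
theorem stmt_9 (q qb : ℂ) (hq : q ≠ 0) (hqb : qb ≠ 0) (m : ℕ) (hm : 1 ≤ m)
    (hroot : (q * qb) ^ m = 1) :
    (∀ x y : ℂ, x ≠ 1 → y ≠ x - 1 →
      ((q * x / (1 - y / (x - 1))) * (qb * y * (1 - y / (x - 1)))) ^ m
        = (x * y) ^ m) ∧
    -- `F(x,y) = (xy)^m` is non-constant
    (∃ x y x' y' : ℂ, (x * y) ^ m ≠ (x' * y') ^ m) :=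
  stmt_9_general q qb m hm hroot
end
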